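/- For real numbers $b > 0$ and $c > 0$, the ring $\mathbb{R}[X,Y]/\langle Y^2 + bX^2 + c \rangle$ is a principal ideal domain but not a Euclidean domain. -/

import Mathlib

section
open MvPolynomial

noncomputable def ellipseIdeal (b c : ℝ) : Ideal (MvPolynomial (Fin 2) ℝ) :=
  Ideal.span {(X 1 : MvPolynomial (Fin 2) ℝ) ^ 2 + MvPolynomial.C b * (X 0) ^ 2 + MvPolynomial.C c}

end

noncomputable section
set_option maxHeartbeats 1000000
set_option synthInstance.maxHeartbeats 400000
namespace Ell
open Polynomial
abbrev P := Polynomial ℝ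
def dd (b c : ℝ) : P := C b * X ^ 2 + C c
def ff (b c : ℝ) : Polynomial P := X ^ 2 + C (dd b c)
abbrev Q (b c : ℝ) := (Polynomial P) ⧸ Ideal.span {ff b c}
def mk (b c : ℝ) : Polynomial P →+* Q b c := Ideal.Quotient.mk _
def phi (b c : ℝ) (p q : P) : Q b c := mk b c (C p + C q * X)
def Nf (b c : ℝ) (p q : P) : P := p ^ 2 + dd b c * q ^ 2

section Exp
variable (b c : ℝ)

lemma deg_CX_le (p q : P) : (C p + C q * X : Polynomial P).degree ≤ 1 := by
  apply le_trans (degree_add_le _ _)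
  rw [max_le_iff]
  refine ⟨le_trans degree_C_le zero_le_one, le_trans (degree_mul_le _ _) ?_⟩
  rw [degree_X]
  calc (C q).degree + 1 ≤ 0 + 1 := by gcongr; exact degree_C_le
    _ = 1 := by norm_num

lemma ff_monic : (ff b c).Monic := by
  simpa [ff] using monic_X_pow_add (n := 2)
    (lt_of_le_of_lt degree_C_le (by norm_num))

lemma ff_degree : (ff b c).degree = 2 := by
  rw [ff, degree_add_eq_left_of_degree_lt]
  · exact degree_X_pow 2
  · rw [degree_X_pow]
    exact lt_of_le_of_lt degree_C_le (by norm_num)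

lemma phi_add (p q r s : P) : phi b c p q + phi b c r s = phi b c (p + r) (q + s) := by
  rw [phi, phi, phi, ← map_add]
  congr 1
  push_cast [map_add]
  ring

lemma mk_f_zero : mk b c (ff b c) = 0 := by
  rw [mk, Ideal.Quotient.eq_zero_iff_mem]
  exact Ideal.subset_span rfl

lemma phi_mul (p q r s : P) :
    phi b c p q * phi b c r s = phi b c (p * r - dd b c * q * s) (p * s + q * r) := by
  rw [phi, phi, phi, ← map_mul]
  rw [show (C p + C q * X) * (C r + C s * X)
      = (C (p * r - dd b c * q * s) + C (p * s + q * r) * X) + C (q * s) * ff b c by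
    push_cast [ff, map_add, map_mul, map_sub]; ring]
  rw [map_add]
  have h0 : mk b c (C (q * s) * ff b c) = 0 := by rw [map_mul, mk_f_zero]; exact mul_zero (mk b c (C (q * s)))
  rw [h0, add_zero]

lemma phi_surj (z : Q b c) : ∃ p q : P, z = phi b c p q := by
  obtain ⟨g, rfl⟩ := Ideal.Quotient.mk_surjective z
  refine ⟨(g %ₘ ff b c).coeff 0, (g %ₘ ff b c).coeff 1, ?_⟩
  have h1 : (Ideal.Quotient.mk (Ideal.span {ff b c})) g = mk b c (g %ₘ ff b c) := by
    rw [mk, Ideal.Quotient.mk_eq_mk_iff_sub_mem, Ideal.mem_span_singleton]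
    exact ⟨g /ₘ ff b c, by linear_combination -(modByMonic_add_div g (ff b c))⟩
  have h2 : g %ₘ ff b c
      = C ((g %ₘ ff b c).coeff 1) * X + C ((g %ₘ ff b c).coeff 0) := by
    apply eq_X_add_C_of_natDegree_le_one
    by_cases h0 : g %ₘ ff b c = 0
    · simp [h0]
    · have h3 := degree_modByMonic_lt g (ff_monic b c)
      rw [ff_degree] at h3
      have : (g %ₘ ff b c).natDegree < 2 := (natDegree_lt_iff_degree_lt h0).mpr (by exact_mod_cast h3)
      omega
  rw [h1, phi]
  congr 1
  conv_lhs => rw [h2]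
  ring

lemma phi_inj {p q : P} (h : phi b c p q = 0) : p = 0 ∧ q = 0 := by
  rw [phi, mk, Ideal.Quotient.eq_zero_iff_mem, Ideal.mem_span_singleton] at h
  have hdeg : (C p + C q * X : Polynomial P).degree < (ff b c).degree := by
    rw [ff_degree]
    exact lt_of_le_of_lt (deg_CX_le p q) (by norm_num)
  have h0 := eq_zero_of_dvd_of_degree_lt h hdeg
  constructor
  · have := congrArg (fun u => Polynomial.coeff u 0) h0
    simpa using this
  · have := congrArg (fun u => Polynomial.coeff u 1) h0
    simpa using this

end Exp
section Imp
variable {b c : ℝ}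

lemma Nf_eval (p q : P) (t : ℝ) :
    (Nf b c p q).eval t = (p.eval t) ^ 2 + (b * t ^ 2 + c) * (q.eval t) ^ 2 := by
  simp only [Nf, dd, eval_add, eval_mul, eval_pow, eval_C, eval_X]

lemma Nf_eval_pos (hb : 0 < b) (hc : 0 < c) {p q : P} {t : ℝ}
    (h : p.eval t ≠ 0 ∨ q.eval t ≠ 0) : 0 < (Nf b c p q).eval t := by
  rw [Nf_eval]
  have hd : 0 < b * t ^ 2 + c := by positivity
  rcases h with h | h
  · have h2 : 0 < (p.eval t) ^ 2 := by positivity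
    nlinarith [sq_nonneg (q.eval t)]
  · have h2 : 0 < (q.eval t) ^ 2 := by positivity
    nlinarith [sq_nonneg (p.eval t)]

lemma Nf_eq_zero (hb : 0 < b) (hc : 0 < c) {p q : P} (h : Nf b c p q = 0) :
    p = 0 ∧ q = 0 := by
  have hpq : ∀ t : ℝ, p.eval t = 0 ∧ q.eval t = 0 := by
    intro t
    by_contra hcon
    rcases not_and_or.mp hcon with h1 | h1
    · exact absurd (h ▸ Nf_eval_pos hb hc (Or.inl h1)) (by simp)
    · exact absurd (h ▸ Nf_eval_pos hb hc (Or.inr h1)) (by simp)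
  constructor
  · apply Polynomial.funext; intro t; simpa using (hpq t).1
  · apply Polynomial.funext; intro t; simpa using (hpq t).2

lemma Nf_brahmagupta (p q r s : P) :
    Nf b c (p * r - dd b c * q * s) (p * s + q * r) = Nf b c p q * Nf b c r s := by
  rw [Nf, Nf, Nf]; ring

lemma dd_natDegree_le : (dd b c).natDegree ≤ 2 := by
  apply le_trans (natDegree_add_le _ _)
  simp only [sup_le_iff]
  exact ⟨le_trans natDegree_mul_le (by simp), by simp⟩

lemma Nf_natDegree_le (p q : P) :
    (Nf b c p q).natDegree ≤ max (2 * p.natDegree) (2 * q.natDegree + 2) := by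
  apply le_trans (natDegree_add_le _ _)
  simp only [sup_le_iff]
  constructor
  · exact le_trans (natDegree_pow p 2).le (le_max_left _ _)
  · refine le_trans natDegree_mul_le (le_trans ?_ (le_max_right _ _))
    have := natDegree_pow q 2
    have := dd_natDegree_le (b := b) (c := c)
    omega

lemma coeff_sq (p : P) {m : ℕ} (hm : p.natDegree ≤ m) :
    (p ^ 2).coeff (2 * m) = (p.coeff m) ^ 2 := by
  rcases eq_or_lt_of_le hm with h | h
  · rcases eq_or_ne p 0 with rfl | hp
    · simp
    · have := coeff_mul_degree_add_degree p p
      rw [sq, sq, ← h]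
      simpa [← h, two_mul] using this
  · rw [coeff_eq_zero_of_natDegree_lt (lt_of_le_of_lt (natDegree_pow p 2).le (by omega)),
      coeff_eq_zero_of_natDegree_lt h]
    ring

lemma coeff_Nf (hb : 0 < b) (p q : P) {m : ℕ} (hp : p.natDegree ≤ m)
    (hq : q.natDegree < m) :
    (Nf b c p q).coeff (2 * m) = (p.coeff m) ^ 2 + b * (q.coeff (m - 1)) ^ 2 := by
  have hX : (X ^ 2 * q ^ 2 : P).coeff (2 * m) = (q ^ 2).coeff (2 * m - 2) := by
    have h7 := coeff_X_pow_mul (q ^ 2) 2 (2 * m - 2)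
    rwa [show 2 * m - 2 + 2 = 2 * m by omega] at h7
  have h1 : (dd b c * q ^ 2).coeff (2 * m)
      = b * (q ^ 2).coeff (2 * m - 2) + c * (q ^ 2).coeff (2 * m) := by
    rw [dd, add_mul, coeff_add, mul_assoc, coeff_C_mul, coeff_C_mul, hX]
  have h3 : (q ^ 2).coeff (2 * m - 2) = (q.coeff (m - 1)) ^ 2 := by
    have h4 : 2 * m - 2 = 2 * (m - 1) := by omega
    rw [h4]; exact coeff_sq q (by omega)
  have h5 : (q ^ 2).coeff (2 * m) = 0 := by
    rw [coeff_sq q (by omega)]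
    rw [coeff_eq_zero_of_natDegree_lt hq]; ring
  rw [Nf, coeff_add, coeff_sq p hp, h1, h3, h5, mul_zero, add_zero]

lemma Nf_natDegree_ge (hb : 0 < b) (hc : 0 < c) {p q : P} (hq : q ≠ 0) :
    2 * q.natDegree + 2 ≤ (Nf b c p q).natDegree := by
  set m := max p.natDegree (q.natDegree + 1) with hm
  have hple : p.natDegree ≤ m := le_max_left _ _
  have hqle : q.natDegree + 1 ≤ m := le_max_right _ _
  have key : (Nf b c p q).coeff (2 * m) ≠ 0 := by
    rw [coeff_Nf hb p q hple (by omega)]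
    have hcase : (p.coeff m ≠ 0) ∨ (q.coeff (m - 1) ≠ 0) := by
      rcases le_or_gt (q.natDegree + 1) p.natDegree with h | h
      · left
        have hmp : m = p.natDegree := by omega
        have hp0 : p ≠ 0 := by
          intro h0; rw [h0] at h; simp at h
        rw [hmp]
        exact mt leadingCoeff_eq_zero.mp hp0
      · right
        have hmq : m - 1 = q.natDegree := by omega
        rw [hmq]
        exact mt leadingCoeff_eq_zero.mp hq
    have h1 : 0 ≤ (p.coeff m) ^ 2 := sq_nonneg _
    have h2 : 0 ≤ (q.coeff (m - 1)) ^ 2 := sq_nonneg _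
    rcases hcase with h | h
    · have : 0 < (p.coeff m) ^ 2 := by positivity
      nlinarith
    · have : 0 < (q.coeff (m - 1)) ^ 2 := by positivity
      nlinarith
  have := le_natDegree_of_ne_zero key
  omega
lemma exists_root (w : P) (h : w.natDegree = 1) : ∃ r : ℝ, w.eval r = 0 := by
  have hw0 : w ≠ 0 := fun h0 => by simp [h0] at h
  have h1 : w.coeff 1 ≠ 0 := by
    have : w.coeff 1 = w.leadingCoeff := by rw [leadingCoeff, h]
    rw [this]
    exact leadingCoeff_ne_zero.mpr hw0
  refine ⟨-(w.coeff 0) / w.coeff 1, ?_⟩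
  conv_lhs => rw [eq_X_add_C_of_natDegree_le_one h.le]
  simp only [eval_add, eval_mul, eval_C, eval_X]
  simp [coeff_X, coeff_C]
  field_simp
  ring

lemma master_red (hb : 0 < b) (hc : 0 < c) {w p q : P} (hw : w ≠ 0)
    (hn : 1 ≤ w.natDegree)
    (hpd : p.degree < w.degree) (hqd : q.degree < w.degree)
    (hpq : ¬(p = 0 ∧ q = 0)) :
    ∃ s₁ s₂ t₁ t₂ F G : P,
      F = s₁ * p - dd b c * s₂ * q - t₁ * w ∧
      G = s₁ * q + s₂ * p - t₂ * w ∧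
      ¬(F = 0 ∧ G = 0) ∧
      (Nf b c F G).natDegree < 2 * w.natDegree := by
  set n := w.natDegree with hndef
  have hwdeg : w.degree = (n : WithBot ℕ) := degree_eq_natDegree hw
  have hpn : p.natDegree ≤ n - 1 := by
    rcases eq_or_ne p 0 with rfl | hp0
    · simp
    · have := (natDegree_lt_iff_degree_lt hp0).mpr (hwdeg ▸ hpd)
      omega
  have hqn : q.natDegree ≤ n - 1 := by
    rcases eq_or_ne q 0 with rfl | hq0
    · simp
    · have := (natDegree_lt_iff_degree_lt hq0).mpr (hwdeg ▸ hqd)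
      omega
  have hNN0 : Nf b c p q ≠ 0 := fun h => hpq (Nf_eq_zero hb hc h)
  by_cases h2n : (Nf b c p q).natDegree < 2 * n
  · exact ⟨1, 0, 0, 0, p, q, by ring, by ring, hpq, h2n⟩
  push_neg at h2n
  -- q ≠ 0 and natDegree q = n - 1
  have hq0 : q ≠ 0 := by
    rintro rfl
    have h3 : Nf b c p 0 = p ^ 2 := by rw [Nf]; ring
    rw [h3, natDegree_pow] at h2n
    omega
  have hqn' : q.natDegree = n - 1 := by
    have h4 := Nf_natDegree_le (b := b) (c := c) p q
    omega
  by_cases hdvd : w ∣ Nf b c p q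
  · -- w divides the norm
    obtain ⟨v, hv⟩ := hdvd
    have hv0 : v ≠ 0 := by rintro rfl; simp at hv; exact hNN0 hv
    have hNdeg : (Nf b c p q).natDegree = 2 * n := by
      have h4 := Nf_natDegree_le (b := b) (c := c) p q
      omega
    have hvdeg : v.natDegree = n := by
      have := natDegree_mul hw hv0
      rw [← hv, hNdeg] at this
      omega
    have hn2 : 2 ≤ n := by
      rcases Nat.lt_or_ge n 2 with h | h
      · exfalso
        have hn1 : n = 1 := by omega
        obtain ⟨r, hr⟩ := exists_root w hn1
        have hqc : q.eval r ≠ 0 := by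
          have : q = C (q.coeff 0) := eq_C_of_natDegree_eq_zero (by omega)
          rw [this, eval_C]
          intro h0
          rw [this, h0, map_zero] at hq0
          exact hq0 rfl
        have hpos := Nf_eval_pos hb hc (Or.inr hqc) (p := p) (q := q)
        rw [hv] at hpos
        simp [eval_mul, hr] at hpos
      · exact h
    set lam := p.coeff (n - 1) with hlam
    set mu := q.coeff (n - 1) with hmu
    have hmu0 : mu ≠ 0 := by
      rw [hmu, ← hqn']
      exact leadingCoeff_ne_zero.mpr hq0
    set G0 : P := C mu * p - C lam * q with hG0
    have hG0deg : G0.natDegree ≤ n - 2 := by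
      rw [natDegree_le_iff_degree_le]
      rw [degree_le_iff_coeff_zero]
      intro m hm
      have hm' : n - 2 < m := by exact_mod_cast hm
      rw [hG0, coeff_sub, coeff_C_mul, coeff_C_mul]
      rcases eq_or_lt_of_le (show n - 1 ≤ m by omega) with h | h
      · rw [← h, ← hlam, ← hmu]; ring
      · rw [coeff_eq_zero_of_natDegree_lt (by omega), coeff_eq_zero_of_natDegree_lt (by omega)]
        ring
    set H : P := C lam * p + C mu * dd b c * q with hH
    set s0 := H / v with hs0
    set F0 := H % v with hF0
    have hHdm : v * s0 + F0 = H := EuclideanDomain.div_add_mod H v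
    by_cases hdeg : F0 = 0 ∧ G0 = 0
    · -- degenerate case
      obtain ⟨hF0z, hG0z⟩ := hdeg
      have hG0e : C mu * p = C lam * q := by
        have h9 : C mu * p - C lam * q = 0 := hG0 ▸ hG0z
        linear_combination h9
      set D : P := C lam ^ 2 + C mu ^ 2 * dd b c with hD
      have hv' : p ^ 2 + dd b c * q ^ 2 = w * v := by rw [← hv, Nf]
      have h1 : C mu ^ 2 * (w * v) = q ^ 2 * D := by
        rw [hD]
        linear_combination (-(C mu ^ 2)) * hv' + (C mu * p + C lam * q) * hG0e
      have h2 : C mu * H = q * D := by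
        rw [hH, hD]
        linear_combination (C lam) * hG0e
      have hH'' : v * s0 = H := by rw [← hHdm, hF0z, add_zero]
      have h3 : (C mu * v) * (C mu * w) = (C mu * v) * (q * s0) := by
        linear_combination h1 - q * h2 - (C mu * q) * hH''
      have h4 : C mu * w = q * s0 :=
        mul_left_cancel₀ (mul_ne_zero (C_ne_zero.mpr hmu0) hv0) h3
      have hs00 : s0 ≠ 0 := by
        intro h0
        rw [h0, mul_zero] at h4
        exact (mul_ne_zero (C_ne_zero.mpr hmu0) hw) h4
      have hs0deg : s0.natDegree = 1 := by
        have e1 : (C mu * w).natDegree = n := by rw [natDegree_C_mul hmu0]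
        have e2 : (q * s0).natDegree = q.natDegree + s0.natDegree := natDegree_mul hq0 hs00
        rw [h4, e2] at e1
        omega
      set rho := D % s0 with hrho
      set tau := D / s0 with htau
      have hDdm : s0 * tau + rho = D := EuclideanDomain.div_add_mod D s0
      have hrho0 : rho ≠ 0 := by
        intro h0
        have hdvdD : s0 ∣ D := EuclideanDomain.mod_eq_zero.mp (hrho ▸ h0)
        obtain ⟨k, hk⟩ := hdvdD
        obtain ⟨r, hr⟩ := exists_root s0 hs0deg
        have hDr : D.eval r = 0 := by rw [hk, eval_mul, hr, zero_mul]
        rw [hD] at hDr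
        simp only [eval_add, eval_mul, eval_pow, eval_C, dd, eval_X] at hDr
        have hmu2 : (0:ℝ) < mu ^ 2 := by positivity
        have hbr : (0:ℝ) < b * r ^ 2 + c := by positivity
        nlinarith [sq_nonneg lam, mul_pos hmu2 hbr]
      have hrhodeg : rho.natDegree = 0 := by
        have h8 := natDegree_mod_lt D (q := s0) (by rw [hs0deg]; exact one_ne_zero)
        rw [← hrho, hs0deg] at h8
        omega
      refine ⟨C lam, -(C mu), tau, 0, H - tau * w, 0, by rw [hH]; ring,
        by linear_combination hG0e, ?_, ?_⟩
      · have hCF : C mu * (H - tau * w) = q * rho := by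
          linear_combination h2 - tau * h4 - q * hDdm
        rintro ⟨hFz, -⟩
        rw [hFz, mul_zero] at hCF
        exact (mul_ne_zero hq0 hrho0) hCF.symm
      · have hCF : C mu * (H - tau * w) = q * rho := by
          linear_combination h2 - tau * h4 - q * hDdm
        have hFne : H - tau * w ≠ 0 := by
          intro h0
          rw [h0, mul_zero] at hCF
          exact (mul_ne_zero hq0 hrho0) hCF.symm
        have hFdeg : (H - tau * w).natDegree = n - 1 := by
          have e1 : (C mu * (H - tau * w)).natDegree = (H - tau * w).natDegree :=
            natDegree_C_mul hmu0
          have e2 : (q * rho).natDegree = q.natDegree + rho.natDegree :=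
            natDegree_mul hq0 hrho0
          rw [hCF, e2] at e1
          omega
        have h5 : Nf b c (H - tau * w) 0 = (H - tau * w) ^ 2 := by rw [Nf]; ring
        rw [h5, natDegree_pow, hFdeg]
        omega
    · -- nondegenerate case
      set M1 : P := s0 * v - H with hM1
      set M2 : P := C lam * q - C mu * p with hM2
      have hv' : p ^ 2 + dd b c * q ^ 2 = w * v := by rw [← hv, Nf]
      set F : P := s0 * p - C lam * w with hFdef
      set G : P := s0 * q - C mu * w with hGdef
      have c1 : M1 * p - dd b c * M2 * q = v * F := by
        rw [hM1, hM2, hFdef, hH]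
        linear_combination (-(C lam)) * hv'
      have c2 : M1 * q + M2 * p = v * G := by
        rw [hM1, hM2, hGdef, hH]
        linear_combination (-(C mu)) * hv'
      have key : Nf b c (v * F) (v * G) = Nf b c M1 M2 * Nf b c p q := by
        rw [← c1, ← c2]
        exact Nf_brahmagupta M1 M2 p q
      have scale : Nf b c (v * F) (v * G) = v ^ 2 * Nf b c F G := by
        rw [Nf, Nf]; ring
      have hkey2 : v * Nf b c F G = Nf b c M1 M2 * w := by
        apply mul_left_cancel₀ hv0
        rw [hv] at key
        linear_combination key - scale
      have hM1F0 : M1 = -F0 := by rw [hM1]; linear_combination hHdm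
      have hNM0 : Nf b c M1 M2 ≠ 0 := by
        intro h0
        obtain ⟨e1, e2⟩ := Nf_eq_zero hb hc h0
        apply hdeg
        constructor
        · rw [hM1F0] at e1
          simpa using e1
        · rw [hM2] at e2
          rw [hG0]
          linear_combination -e2
      have hFG0 : ¬(F = 0 ∧ G = 0) := by
        rintro ⟨e1, e2⟩
        rw [e1, e2] at hkey2
        have : Nf b c (0 : P) 0 = 0 := by rw [Nf]; ring
        rw [this, mul_zero] at hkey2
        exact hNM0 (by
          rcases mul_eq_zero.mp hkey2.symm with h | h
          · exact h
          · exact absurd h hw)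
      have hNFG0 : Nf b c F G ≠ 0 := fun h0 => hFG0 (Nf_eq_zero hb hc h0)
      have hdeg1 : (Nf b c F G).natDegree + n = (Nf b c M1 M2).natDegree + n := by
        have e1 := natDegree_mul hv0 hNFG0
        have e2 := natDegree_mul hNM0 hw
        rw [hkey2] at e1
        rw [e1] at e2
        omega
      have hM1deg : M1.natDegree ≤ n - 1 := by
        rw [hM1F0, natDegree_neg]
        rcases eq_or_ne F0 0 with h0 | h0
        · rw [h0]; simp
        · have h8 := natDegree_mod_lt H (q := v) (by rw [hvdeg]; omega)
          rw [← hF0, hvdeg] at h8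
          omega
      have hM2deg : M2.natDegree ≤ n - 2 := by
        have : M2 = -G0 := by rw [hM2, hG0]; ring
        rw [this, natDegree_neg]
        exact hG0deg
      have hNM : (Nf b c M1 M2).natDegree ≤ 2 * n - 2 := by
        have := Nf_natDegree_le (b := b) (c := c) M1 M2
        omega
      exact ⟨s0, 0, C lam, C mu, F, G, by rw [hFdef]; ring, by rw [hGdef]; ring,
        hFG0, by omega⟩
  · -- w does not divide the norm
    set F := Nf b c p q % w with hF
    set M := Nf b c p q / w with hM
    have hdm : w * M + F = Nf b c p q := EuclideanDomain.div_add_mod _ w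
    have hF0 : F ≠ 0 := fun h => hdvd (EuclideanDomain.mod_eq_zero.mp (hF ▸ h))
    have hFdeg : F.natDegree < n := natDegree_mod_lt _ (by omega)
    refine ⟨p, -q, M, 0, F, 0, ?_, by ring, fun h => hF0 h.1, ?_⟩
    · have : Nf b c p q = p ^ 2 + dd b c * q ^ 2 := by rw [Nf]
      linear_combination hdm + this
    · have h5 : Nf b c F 0 = F ^ 2 := by rw [Nf]; ring
      rw [h5, natDegree_pow]
      omega


lemma master (hb : 0 < b) (hc : 0 < c) {w p q : P} (hw : w ≠ 0)
    (hnd : ¬ (w ∣ p ∧ w ∣ q)) :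
    ∃ s₁ s₂ t₁ t₂ F G : P,
      F = s₁ * p - dd b c * s₂ * q - t₁ * w ∧
      G = s₁ * q + s₂ * p - t₂ * w ∧
      ¬(F = 0 ∧ G = 0) ∧
      (Nf b c F G).natDegree < 2 * w.natDegree := by
  have hn : 1 ≤ w.natDegree := by
    by_contra h
    push_neg at h
    have h0 : w.natDegree = 0 := by omega
    have hu : IsUnit w := by
      have hc0 : w.coeff 0 ≠ 0 := by
        intro hz
        exact hw (by rw [eq_C_of_natDegree_eq_zero h0, hz, map_zero])
      rw [eq_C_of_natDegree_eq_zero h0]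
      exact isUnit_C.mpr hc0.isUnit
    exact hnd ⟨hu.dvd, hu.dvd⟩
  have hpq : ¬(p % w = 0 ∧ q % w = 0) := by
    rintro ⟨h1, h2⟩
    exact hnd ⟨EuclideanDomain.mod_eq_zero.mp h1, EuclideanDomain.mod_eq_zero.mp h2⟩
  obtain ⟨s₁, s₂, t₁, t₂, F, G, hFe, hGe, hFG, hdeg⟩ :=
    master_red hb hc hw hn (EuclideanDomain.mod_lt p hw) (EuclideanDomain.mod_lt q hw) hpq
  have hp := EuclideanDomain.div_add_mod p w
  have hq := EuclideanDomain.div_add_mod q w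
  exact ⟨s₁, s₂, t₁ + s₁ * (p / w) - dd b c * s₂ * (q / w),
    t₂ + s₁ * (q / w) + s₂ * (p / w), F, G,
    by rw [hFe]; linear_combination s₁ * hp + (-(dd b c * s₂)) * hq,
    by rw [hGe]; linear_combination s₁ * hq + s₂ * hp, hFG, hdeg⟩

-- ## Q-level machinery

lemma phi_zero : phi b c 0 0 = 0 := by
  simp [phi]

lemma phi_congr {p q p' q' : P} (h1 : p = p') (h2 : q = q') :
    phi b c p q = phi b c p' q' := by rw [h1, h2]

lemma phi_sub (p q r s : P) :
    phi b c p q - phi b c r s = phi b c (p - r) (q - s) := by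
  have h := phi_add b c (p - r) (q - s) r s
  simp only [sub_add_cancel] at h
  linear_combination -h

lemma phi_inj' {p q r s : P} (h : phi b c p q = phi b c r s) : p = r ∧ q = s := by
  have h0 : phi b c (p - r) (q - s) = 0 := by
    rw [← phi_sub, h, sub_self]
  obtain ⟨h1, h2⟩ := phi_inj b c h0
  exact ⟨sub_eq_zero.mp h1, sub_eq_zero.mp h2⟩

def co (z : Q b c) : P × P :=
  ⟨(phi_surj b c z).choose, (phi_surj b c z).choose_spec.choose⟩

lemma co_spec (z : Q b c) : z = phi b c (co z).1 (co z).2 :=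
  (phi_surj b c z).choose_spec.choose_spec

def NQ (z : Q b c) : P := Nf b c (co z).1 (co z).2

lemma NQ_phi (p q : P) : NQ (phi b c p q) = Nf b c p q := by
  obtain ⟨h1, h2⟩ := phi_inj' (co_spec (phi b c p q)).symm
  rw [NQ, h1, h2]

lemma one_eq_phi : (1 : Q b c) = phi b c 1 0 := by
  simp [phi, mk]

lemma NQ_zero : NQ (0 : Q b c) = 0 := by
  rw [← phi_zero, NQ_phi, Nf]
  ring

lemma NQ_mul (y z : Q b c) : NQ (y * z) = NQ y * NQ z := by
  conv_lhs => rw [co_spec y, co_spec z]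
  rw [phi_mul, NQ_phi, NQ, NQ]
  exact Nf_brahmagupta _ _ _ _

lemma NQ_eq_zero (hb : 0 < b) (hc : 0 < c) {z : Q b c} (h : NQ z = 0) : z = 0 := by
  obtain ⟨h1, h2⟩ := Nf_eq_zero hb hc h
  rw [co_spec z, h1, h2, phi_zero]

lemma DH (hb : 0 < b) (hc : 0 < c) {z a : Q b c} (hz : z ≠ 0) (hnd : ¬ z ∣ a) :
    ∃ y : Q b c, (∃ s t : Q b c, y = s * a - t * z) ∧ y ≠ 0 ∧
      (NQ y).natDegree < (NQ z).natDegree := by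
  obtain ⟨zp, zq, hz'⟩ := phi_surj b c z
  set w : P := Nf b c zp zq with hw
  have hNQz : NQ z = w := by rw [hz', NQ_phi]
  have hw0 : w ≠ 0 := by
    intro h0
    rw [hw] at h0
    obtain ⟨e1, e2⟩ := Nf_eq_zero hb hc h0
    exact hz (by rw [hz', e1, e2, phi_zero])
  set zc : Q b c := phi b c zp (-zq) with hzc
  have hzc0 : zc ≠ 0 := by
    intro h0
    rw [hzc] at h0
    obtain ⟨e1, e2⟩ := phi_inj b c h0
    exact hz (by rw [hz', e1, neg_eq_zero.mp e2, phi_zero])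
  have hzzc : z * zc = phi b c w 0 := by
    rw [hz', hzc, phi_mul]
    exact phi_congr (by rw [hw, Nf]; ring) (by ring)
  obtain ⟨p, q, hacz⟩ := phi_surj b c (a * zc)
  have hndvd : ¬ (w ∣ p ∧ w ∣ q) := by
    rintro ⟨⟨u1, hu1⟩, ⟨u2, hu2⟩⟩
    apply hnd
    refine ⟨phi b c u1 u2, ?_⟩
    have h3 : phi b c w 0 * phi b c u1 u2 = phi b c p q := by
      rw [phi_mul]
      exact phi_congr (by rw [hu1]; ring) (by rw [hu2]; ring)
    have h2 : (a - z * phi b c u1 u2) * zc = 0 := by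
      calc (a - z * phi b c u1 u2) * zc
          = a * zc - (z * zc) * phi b c u1 u2 := by ring
        _ = phi b c p q - phi b c w 0 * phi b c u1 u2 := by rw [hacz, hzzc]
        _ = 0 := by rw [h3, sub_self]
    have hQ0 : ∀ {y1 y2 : Q b c}, y1 * y2 = 0 → y1 = 0 ∨ y2 = 0 := by
      intro y1 y2 hy
      have h1 : NQ (y1 * y2) = 0 := by rw [hy, NQ_zero]
      rw [NQ_mul] at h1
      rcases mul_eq_zero.mp h1 with h4 | h4
      · exact Or.inl (NQ_eq_zero hb hc h4)
      · exact Or.inr (NQ_eq_zero hb hc h4)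
    rcases hQ0 h2 with h4 | h4
    · linear_combination h4
    · exact absurd h4 hzc0
  obtain ⟨s₁, s₂, t₁, t₂, F, G, hFe, hGe, hFG, hdeg⟩ := master hb hc hw0 hndvd
  set s := phi b c s₁ s₂ with hs
  set t := phi b c t₁ t₂ with ht
  refine ⟨s * a - t * z, ⟨s, t, rfl⟩, ?_, ?_⟩
  all_goals {
    have hycj : (s * a - t * z) * zc = phi b c F G := by
      calc (s * a - t * z) * zc = s * (a * zc) - t * (z * zc) := by ring
        _ = phi b c s₁ s₂ * phi b c p q - phi b c t₁ t₂ * phi b c w 0 := by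
            rw [hacz, hzzc, hs, ht]
        _ = phi b c (s₁ * p - dd b c * s₂ * q) (s₁ * q + s₂ * p)
            - phi b c (t₁ * w) (t₂ * w) := by
            rw [phi_mul, phi_mul]
            exact congrArg₂ (· - ·) (phi_congr rfl rfl) (phi_congr (by ring) (by ring))
        _ = phi b c F G := by
            rw [phi_sub]
            exact phi_congr (by linear_combination -hFe) (by linear_combination -hGe)
    have hy0 : s * a - t * z ≠ 0 := by
      intro h0
      rw [h0] at hycj
      have h5 : phi b c F G = 0 := by rw [← hycj]; exact zero_mul zc
      exact hFG (phi_inj b c h5)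
    first
      | exact hy0
      | (have hNzc : NQ zc = w := by
          rw [hzc, NQ_phi, hw, Nf, Nf]; ring
         have hNy : NQ (s * a - t * z) * w = Nf b c F G := by
          rw [← hNzc, ← NQ_mul, hycj, NQ_phi]
         have hNy0 : NQ (s * a - t * z) ≠ 0 := fun h0 => hy0 (NQ_eq_zero hb hc h0)
         have hdd := natDegree_mul hNy0 hw0
         rw [hNy] at hdd
         rw [hNQz]
         omega)
  }

lemma isPID (hb : 0 < b) (hc : 0 < c) : IsPrincipalIdealRing (Q b c) := by
  constructor
  intro I
  by_cases hbot : I = ⊥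
  · exact hbot ▸ ⟨0, Ideal.span_zero.symm⟩
  have hne : ∃ z ∈ I, z ≠ 0 := by
    by_contra h
    push_neg at h
    exact hbot ((Submodule.eq_bot_iff I).mpr h)
  set S : Set ℕ := {k | ∃ z ∈ I, z ≠ 0 ∧ (NQ z).natDegree = k} with hS
  have hSne : S.Nonempty := by
    obtain ⟨z, hzI, hz0⟩ := hne
    exact ⟨(NQ z).natDegree, z, hzI, hz0, rfl⟩
  obtain ⟨z, hzI, hz0, hzdeg⟩ := Nat.sInf_mem hSne
  refine ⟨z, ?_⟩
  apply le_antisymm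
  · intro a haI
    rw [Ideal.submodule_span_eq, Ideal.mem_span_singleton (α := Q b c)]
    by_cases hdvd : z ∣ a
    · exact hdvd
    exfalso
    obtain ⟨y, ⟨s, t, hy⟩, hy0, hydeg⟩ := DH hb hc hz0 hdvd
    have hyI : y ∈ I := by
      rw [hy]
      exact I.sub_mem (I.mul_mem_left s haI) (I.mul_mem_left t hzI)
    have hmem : (NQ y).natDegree ∈ S := ⟨y, hyI, hy0, rfl⟩
    have := Nat.sInf_le hmem
    omega
  · rw [Ideal.submodule_span_eq, Ideal.span_le, Set.singleton_subset_iff]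
    exact hzI

-- ## units and non-Euclideanity

lemma NQ_one' : NQ (1 : Q b c) = 1 := by
  rw [one_eq_phi, NQ_phi, Nf]
  ring

lemma unit_is_real (hb : 0 < b) (hc : 0 < c) {z : Q b c} (hz : IsUnit z) :
    ∃ r : ℝ, z = phi b c (C r) 0 := by
  obtain ⟨u, rfl⟩ := hz
  have h1 : NQ ((u : Q b c)) * NQ (((u⁻¹ : (Q b c)ˣ)) : Q b c) = 1 := by
    rw [← NQ_mul, Units.mul_inv, NQ_one']
  have h2 : IsUnit (NQ (u : Q b c)) := IsUnit.of_mul_eq_one _ h1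
  obtain ⟨r, hru, hrC⟩ := Polynomial.isUnit_iff.mp h2
  obtain ⟨p, q, hpq⟩ := phi_surj b c (u : Q b c)
  rw [hpq, NQ_phi] at hrC
  have hq0 : q = 0 := by
    by_contra hq
    have := Nf_natDegree_ge hb hc (p := p) hq
    rw [← hrC, natDegree_C] at this
    omega
  rw [hq0] at hrC hpq
  have hp2 : p ^ 2 = C r := by
    rw [hrC, Nf]; ring
  have hr0 : r ≠ 0 := hru.ne_zero
  have hp0 : p ≠ 0 := by
    intro h0
    rw [h0] at hp2
    exact hr0 (by simpa using hp2.symm)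
  have hpdeg : p.natDegree = 0 := by
    have h3 := natDegree_pow p 2
    rw [hp2, natDegree_C] at h3
    omega
  refine ⟨p.coeff 0, ?_⟩
  rw [hpq]
  exact phi_congr (eq_C_of_natDegree_eq_zero hpdeg) rfl

lemma theta_sq : phi b c 0 1 * phi b c 0 1 = phi b c (-(dd b c)) 0 := by
  rw [phi_mul]
  exact phi_congr (by ring) (by ring)

lemma not_euclid (hb : 0 < b) (hc : 0 < c) :
    ¬ ∃ δ : Q b c → ℕ, ∀ a b' : Q b c, b' ≠ 0 →
        ∃ q r, a = q * b' + r ∧ (r = 0 ∨ δ r < δ b') := by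
  rintro ⟨δ, hδ⟩
  set T : Set (Q b c) := {z | z ≠ 0 ∧ ¬ IsUnit z} with hT
  have hθT : phi b c 0 1 ∈ T := by
    constructor
    · intro h0
      have := (phi_inj b c h0).2
      simp at this
    · intro hu
      obtain ⟨r, hr⟩ := unit_is_real hb hc hu
      have := (phi_inj' hr).2
      simp at this
  have hTne : (δ '' T).Nonempty := ⟨δ (phi b c 0 1), _, hθT, rfl⟩
  obtain ⟨m, hmT, hmδ⟩ := Nat.sInf_mem hTne
  set M : Ideal (Q b c) := @Ideal.span (Q b c) CommSemiring.toSemiring {m} with hM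
  have hMne : M ≠ ⊤ := by
    rw [hM, Ne, Ideal.span_singleton_eq_top (α := Q b c)]
    exact hmT.2
  haveI : Nontrivial (Q b c ⧸ M) := Ideal.Quotient.nontrivial_iff.mpr hMne
  set π : Q b c →+* Q b c ⧸ M := Ideal.Quotient.mk M with hπ
  set ρ : ℝ →+* Q b c :=
    (mk b c).comp ((Polynomial.C : P →+* Polynomial P).comp (Polynomial.C : ℝ →+* P)) with hρ
  have hρφ : ∀ r : ℝ, ρ r = phi b c (C r) 0 := by
    intro r
    rw [hρ, phi]
    simp
  have hkey : ∀ z : Q b c, ∃ r : ℝ, π z = π (ρ r) := by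
    intro z
    obtain ⟨qq, rr, hzr, hcase⟩ := hδ z m hmT.1
    have hrr : ∃ r : ℝ, rr = ρ r := by
      by_cases hrr0 : rr = 0
      · exact ⟨0, by rw [hrr0, ρ.map_zero]⟩
      rcases hcase with h0 | hlt
      · exact absurd h0 hrr0
      have hrT : rr ∉ T := by
        intro hin
        have h4 : δ rr ∈ δ '' T := ⟨rr, hin, rfl⟩
        have := Nat.sInf_le h4
        omega
      have hru : IsUnit rr := by
        by_contra hnu
        exact hrT ⟨hrr0, hnu⟩
      obtain ⟨r, hr⟩ := unit_is_real hb hc hru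
      exact ⟨r, by rw [hr, hρφ]⟩
    obtain ⟨r, hr⟩ := hrr
    refine ⟨r, ?_⟩
    rw [hzr, hr, π.map_add, π.map_mul]
    have hm0 : π m = 0 := by
      rw [hπ, Ideal.Quotient.eq_zero_iff_mem]
      exact Ideal.subset_span rfl
    rw [hm0, mul_zero, zero_add]
  have hsurj : Function.Surjective (π.comp ρ) := by
    intro u
    obtain ⟨z, rfl⟩ := Ideal.Quotient.mk_surjective u
    obtain ⟨r, hr⟩ := hkey z
    exact ⟨r, hr.symm⟩
  have hinj : Function.Injective (π.comp ρ) := (π.comp ρ).injective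
  set E := RingEquiv.ofBijective (π.comp ρ) ⟨hinj, hsurj⟩ with hE
  set χ : Q b c →+* ℝ := (E.symm : Q b c ⧸ M →+* ℝ).comp π with hχ
  have hχρ : ∀ r : ℝ, χ (ρ r) = r := by
    intro r
    rw [hχ]
    simp only [RingHom.comp_apply]
    have h2 : π (ρ r) = E r := rfl
    rw [h2]
    exact E.symm_apply_apply r
  have efin : ∀ (u v : P), u = 0 → v = 0 → phi b c u v = 0 := by
    intro u v hu hv
    rw [hu, hv, phi_zero]
  have hrel : phi b c 0 1 * phi b c 0 1 + (ρ b * (phi b c X 0 * phi b c X 0) + ρ c) = 0 := by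
    have e0 : phi b c X 0 * phi b c X 0 = phi b c (X ^ 2) 0 := by
      rw [phi_mul]
      exact phi_congr (by ring) (by ring)
    rw [theta_sq, e0, hρφ b, hρφ c, phi_mul, phi_add, phi_add]
    apply efin
    · rw [dd]; ring
    · ring
  have hfinal := congrArg χ hrel
  rw [χ.map_add, χ.map_add, χ.map_mul, χ.map_mul, χ.map_mul, hχρ, hχρ, χ.map_zero] at hfinal
  set A := χ (phi b c X 0) with hA
  set B := χ (phi b c 0 1) with hB
  nlinarith [mul_self_nonneg A, mul_self_nonneg B, mul_nonneg hb.le (mul_self_nonneg A)]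

end Imp
-- ## transfer isomorphism

def inner1 : MvPolynomial (Fin 1) ℝ ≃ₐ[ℝ] P :=
  (MvPolynomial.finSuccEquiv ℝ 0).trans
    (Polynomial.mapAlgEquiv (MvPolynomial.isEmptyAlgEquiv ℝ (Fin 0)))

def Emv : MvPolynomial (Fin 2) ℝ ≃ₐ[ℝ] Polynomial P :=
  (MvPolynomial.renameEquiv ℝ (Equiv.swap 0 1)).trans
    ((MvPolynomial.finSuccEquiv ℝ 1).trans (Polynomial.mapAlgEquiv inner1))

lemma inner1_X : inner1 (MvPolynomial.X 0) = X := by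
  simp [inner1, MvPolynomial.finSuccEquiv_X_zero]

lemma Emv_X1 : Emv (MvPolynomial.X 1) = X := by
  simp [Emv, MvPolynomial.finSuccEquiv_X_zero, Equiv.swap_apply_right]

lemma Emv_X0 : Emv (MvPolynomial.X 0) = Polynomial.C X := by
  rw [Emv]
  simp only [AlgEquiv.trans_apply, MvPolynomial.renameEquiv_apply, MvPolynomial.rename_X]
  rw [show (Equiv.swap (0 : Fin 2) 1) 0 = 1 from Equiv.swap_apply_left 0 1,
    show (1 : Fin 2) = (0 : Fin 1).succ from rfl, MvPolynomial.finSuccEquiv_X_succ]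
  simp [Polynomial.mapAlgEquiv, inner1_X]

lemma Emv_C (r : ℝ) : Emv (MvPolynomial.C r) = Polynomial.C (Polynomial.C r) := by
  have : Emv (MvPolynomial.C r) = algebraMap ℝ _ r := by
    rw [show (MvPolynomial.C r : MvPolynomial (Fin 2) ℝ) = algebraMap ℝ _ r from rfl]
    exact Emv.commutes r
  rw [this]
  rfl

lemma Emv_gen (b c : ℝ) :
    Emv ((MvPolynomial.X 1 : MvPolynomial (Fin 2) ℝ) ^ 2
      + MvPolynomial.C b * (MvPolynomial.X 0) ^ 2 + MvPolynomial.C c) = ff b c := by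
  rw [map_add, map_add, map_mul, map_pow, map_pow, Emv_X0, Emv_X1, Emv_C, Emv_C, ff, dd]
  push_cast [map_add, map_mul]
  rw [C_pow]
  ring

end Ell

open MvPolynomial

theorem pid_not_euclidean (b c : ℝ) (hb : 0 < b) (hc : 0 < c) :
    IsPrincipalIdealRing (MvPolynomial (Fin 2) ℝ ⧸ ellipseIdeal b c) ∧
    ¬ ∃ δ : (MvPolynomial (Fin 2) ℝ ⧸ ellipseIdeal b c) → ℕ,
        ∀ a b' : MvPolynomial (Fin 2) ℝ ⧸ ellipseIdeal b c, b' ≠ 0 →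
          ∃ q r, a = q * b' + r ∧ (r = 0 ∨ δ r < δ b') := by
  have hmap : Ideal.span {Ell.ff b c}
      = Ideal.map (Ell.Emv : MvPolynomial (Fin 2) ℝ ≃+* Polynomial Ell.P)
        (ellipseIdeal b c) := by
    rw [ellipseIdeal, Ideal.map_span, Set.image_singleton]
    congr 1
    rw [← Ell.Emv_gen b c]
    rfl
  let E2 : (MvPolynomial (Fin 2) ℝ ⧸ ellipseIdeal b c) ≃+* Ell.Q b c :=
    Ideal.quotientEquiv (ellipseIdeal b c) (Ideal.span {Ell.ff b c})
      (Ell.Emv : MvPolynomial (Fin 2) ℝ ≃+* Polynomial Ell.P) hmap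
  constructor
  · haveI := Ell.isPID hb hc
    exact IsPrincipalIdealRing.of_surjective (E2.symm : Ell.Q b c →+* _) E2.symm.surjective
  · rintro ⟨δ, hδ⟩
    apply Ell.not_euclid hb hc
    refine ⟨fun z => δ (E2.symm z), ?_⟩
    intro a b' hb'
    have hb'' : E2.symm b' ≠ 0 := by
      intro h0
      apply hb'
      have h1 := congrArg E2 h0
      simpa using h1
    obtain ⟨q, r, h1, h2⟩ := hδ (E2.symm a) (E2.symm b') hb''
    refine ⟨E2 q, E2 r, ?_, ?_⟩
    · have h3 := congrArg E2 h1
      simpa using h3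
    · rcases h2 with h0 | hlt
      · left
        rw [h0, map_zero]
      · right
        simpa using hlt
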